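/- If R : ℝ^N → ℝ is uniformly convex with modulus h satisfying liminf_{s→∞} h(s)/s = ∞ along the norm (or more simply: if R is uniformly convex on a finite-dimensional space), then for any subgradient ξ ∈ ∂R(x̂), the Bregman distance B^R_ξ(·, x̂) is coercive, i.e., B^R_ξ(x, x̂)/‖x‖ → ∞ as ‖x‖ → ∞. -/

import Mathlib

/-!
Subtracting the linear part, `D = R - ⟪ξ, ·⟫` is uniformly convex and minimal at `x̂`. Along any
unit ray `n ↦ D (x̂ + n • u)`, uniform convexity at the midpoint of `n` and `n + 2` makes the
second differences at least `h 2 / 2`, so `D` grows at least like `h 2 / 4 * n * (n - 1)`,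
uniformly in `u`. Since `D` is convex with its minimum at `x̂`, it is nondecreasing along rays,
which gives `D x - D x̂ ≥ h 2 / 4 * (‖x - x̂‖ - 2) ^ 2`: quadratic, hence superlinear, growth.
-/

open Filter Set

lemma add_mul_le_of_second_difference {a : ℕ → ℝ} {c : ℝ} (h0 : a 0 ≤ a 1)
    (h : ∀ n, a (n + 1) + c ≤ (a n + a (n + 2)) / 2) (n : ℕ) :
    a 0 + c * (n * (n - 1)) ≤ a n := by
  have hstep : ∀ n : ℕ, 2 * c * n ≤ a (n + 1) - a n := by
    intro n
    induction n with
    | zero => simpa using h0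
    | succ n ih => push_cast; linarith [h n]
  induction n with
  | zero => simp
  | succ n ih => push_cast; linear_combination ih + hstep n

lemma tendsto_div_norm_atTop_of_mul_sq_le {E : Type*} [SeminormedAddCommGroup E] {x₀ : E}
    {g : E → ℝ} {c : ℝ} (hc : 0 < c)
    (hg : ∀ x, 2 ≤ ‖x - x₀‖ → c * (‖x - x₀‖ - 2) ^ 2 ≤ g x) :
    Tendsto (fun x ↦ g x / ‖x‖) (comap norm atTop) atTop := by
  have hlin : Tendsto (fun x : E ↦ c / 2 * (‖x‖ - (‖x₀‖ + 2))) (comap norm atTop) atTop :=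
    (tendsto_atTop_add_const_right _ _ tendsto_comap).const_mul_atTop (by positivity)
  refine tendsto_atTop_mono' _ ?_ hlin
  filter_upwards [tendsto_comap.eventually (eventually_ge_atTop (2 * ‖x₀‖ + 4))] with x hx
  have hdist : ‖x‖ - ‖x₀‖ ≤ ‖x - x₀‖ := norm_sub_norm_le x x₀
  have hx₀ := norm_nonneg x₀
  rw [le_div_iff₀ (by linarith)]
  have hsq : (‖x‖ - (‖x₀‖ + 2)) * ‖x‖ ≤ 2 * (‖x - x₀‖ - 2) ^ 2 := by nlinarith
  nlinarith [hg x (by linarith)]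

section UniformConvex

variable {E : Type*} [NormedAddCommGroup E] [NormedSpace ℝ E] {φ : ℝ → ℝ} {f : E → ℝ}
  {s : Set E} {x₀ : E}

lemma UniformConvexOn.convexOn_of_nonneg (hf : UniformConvexOn s φ f)
    (hφ : ∀ r, 0 ≤ r → 0 ≤ φ r) : ConvexOn ℝ s f :=
  ⟨hf.1, fun x hx y hy _ _ ha hb hab ↦ (hf.2 hx hy ha hb hab).trans <|
    sub_le_self _ (by have := hφ _ (norm_nonneg (x - y)); positivity)⟩

lemma ConvexOn.le_of_isMinOn_of_mem_Icc (hf : ConvexOn ℝ univ f) (hmin : IsMinOn f univ x₀)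
    {t : ℝ} (ht : t ∈ Icc 0 1) (x : E) : f (x₀ + t • (x - x₀)) ≤ f x :=
  (hf.le_on_segment trivial trivial (segment_eq_image' ℝ x₀ x ▸ ⟨t, ht, rfl⟩)).trans
    (max_le (hmin trivial) le_rfl)

lemma UniformConvexOn.add_mul_le_of_isMinOn (hf : UniformConvexOn univ φ f)
    (hmin : IsMinOn f univ x₀) {u : E} (hu : ‖u‖ = 1) (n : ℕ) :
    f x₀ + φ 2 / 4 * (n * (n - 1)) ≤ f (x₀ + (n : ℝ) • u) := by
  have hmid : ∀ r : ℝ, f (x₀ + (r + 1) • u) + φ 2 / 4 ≤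
      (f (x₀ + r • u) + f (x₀ + (r + 2) • u)) / 2 := by
    intro r
    have h := hf.2 (mem_univ (x₀ + r • u)) (mem_univ (x₀ + (r + 2) • u))
      (by norm_num : (0 : ℝ) ≤ 1 / 2) (by norm_num : (0 : ℝ) ≤ 1 / 2) (by norm_num)
    have hpt : (1 / 2 : ℝ) • (x₀ + r • u) + (1 / 2 : ℝ) • (x₀ + (r + 2) • u) =
        x₀ + (r + 1) • u := by
      module
    have hdist : ‖x₀ + r • u - (x₀ + (r + 2) • u)‖ = 2 := by
      rw [show x₀ + r • u - (x₀ + (r + 2) • u) = (-2 : ℝ) • u by module, norm_smul, hu]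
      norm_num
    rw [hpt, hdist, smul_eq_mul, smul_eq_mul] at h
    linarith
  simpa using add_mul_le_of_second_difference (a := fun n : ℕ ↦ f (x₀ + (n : ℝ) • u))
    (c := φ 2 / 4) (by simpa using hmin (mem_univ _)) (fun n ↦ by push_cast; linarith [hmid n]) n

lemma UniformConvexOn.add_mul_sq_le_of_isMinOn (hf : UniformConvexOn univ φ f)
    (hφ : ∀ r, 0 ≤ r → 0 ≤ φ r) (hmin : IsMinOn f univ x₀) {x : E} (hx : 2 ≤ ‖x - x₀‖) :
    f x₀ + φ 2 / 4 * (‖x - x₀‖ - 2) ^ 2 ≤ f x := by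
  set r := ‖x - x₀‖
  have hr : 0 < r := by linarith
  set n := ⌊r⌋₊
  have hnr : (n : ℝ) ≤ r := Nat.floor_le hr.le
  have hrn : r - 1 ≤ n := by linarith [Nat.lt_floor_add_one r]
  have hray : f (x₀ + (n : ℝ) • (r⁻¹ • (x - x₀))) ≤ f x := by
    rw [smul_smul, ← div_eq_mul_inv]
    exact (hf.convexOn_of_nonneg hφ).le_of_isMinOn_of_mem_Icc hmin
      ⟨by positivity, div_le_one_of_le₀ hnr hr.le⟩ x
  have hunit : ‖r⁻¹ • (x - x₀)‖ = 1 := by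
    rw [norm_smul, norm_inv, norm_norm, inv_mul_cancel₀ hr.ne']
  have hquad := hf.add_mul_le_of_isMinOn hmin hunit n
  have hφ2 : 0 ≤ φ 2 / 4 := by have := hφ 2 (by norm_num); positivity
  have hsq : (r - 2) ^ 2 ≤ n * (n - 1) := by nlinarith
  nlinarith [mul_le_mul_of_nonneg_left hsq hφ2]

theorem UniformConvexOn.tendsto_sub_div_norm_atTop (hf : UniformConvexOn univ φ f)
    (hφ : ∀ r, 0 ≤ r → 0 ≤ φ r) (hφ2 : 0 < φ 2) (hmin : IsMinOn f univ x₀) :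
    Tendsto (fun x ↦ (f x - f x₀) / ‖x‖) (comap norm atTop) atTop :=
  tendsto_div_norm_atTop_of_mul_sq_le (by positivity) fun _ hx ↦
    le_sub_iff_add_le'.2 (hf.add_mul_sq_le_of_isMinOn hφ hmin hx)

end UniformConvex

theorem bregman_coercive {N : ℕ} (R : (Fin N → ℝ) → ℝ)
    (hR : ∃ h : ℝ → ℝ, (∀ s, 0 ≤ s → 0 ≤ h s) ∧ (∀ s, 0 ≤ s → (h s = 0 ↔ s = 0)) ∧
      ∀ x y : Fin N → ℝ, ∀ t ∈ Set.Icc (0:ℝ) 1,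
        R (t • x + (1 - t) • y) + t * (1 - t) * h ‖x - y‖ ≤ t * R x + (1 - t) * R y)
    (xh ξ : Fin N → ℝ)
    (hsub : ∀ x, R xh + ∑ i, ξ i * (x i - xh i) ≤ R x) :
    Filter.Tendsto
      (fun x : Fin N → ℝ => (R x - R xh - ∑ i, ξ i * (x i - xh i)) / ‖x‖)
      (Filter.comap norm Filter.atTop) Filter.atTop := by
  obtain ⟨h, hpos, hzero, huc⟩ := hR
  have hR : UniformConvexOn univ h R := by
    refine ⟨convex_univ, fun x _ y _ a b ha hb hab ↦ ?_⟩
    obtain rfl : b = 1 - a := by linarith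
    have := huc x y a ⟨ha, by linarith⟩
    simp only [smul_eq_mul]
    linarith
  have hh2 : 0 < h 2 := (hpos 2 zero_le_two).lt_of_ne' fun h0 ↦ by
    simpa using (hzero 2 zero_le_two).1 h0
  set ℓ : (Fin N → ℝ) →ₗ[ℝ] ℝ := dotProductEquiv ℝ (Fin N) ξ
  have hℓ : ∀ x, ∑ i, ξ i * (x i - xh i) = ℓ x - ℓ xh := fun x ↦ by
    simp [ℓ, dotProduct, mul_sub]
  have hF : UniformConvexOn univ h (R - ⇑ℓ) := by
    simpa using hR.sub (ℓ.concaveOn convex_univ).uniformConcaveOn_zero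
  have hmin : IsMinOn (R - ⇑ℓ) univ xh := isMinOn_univ_iff.2 fun x ↦ by
    have := hsub x
    rw [hℓ] at this
    simp only [Pi.sub_apply]
    linarith
  refine (hF.tendsto_sub_div_norm_atTop hpos hh2 hmin).congr fun x ↦ ?_
  simp only [Pi.sub_apply, hℓ]
  ring
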